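/- arXiv:2307.06406 — 6 statements merged into one kernel-verified Lean document; each statement's English description precedes it below -/
import Mathlib

section
/- Let p ≥ 1 and let A be a p×p real matrix whose vertices are listed in a topological order, i.e. A i j ≠ 0 implies i < j (so A is the weighted adjacency matrix of a DAG and I − A is invertible). Let D be a diagonal p×p matrix with strictly positive diagonal entries σ_i² (the error variances), and define the covariance matrix Σ = (I − Aᵀ)⁻¹ D (I − A)⁻¹, the inverse covariance matrix P = Σ⁻¹, and the normalized inverse covariance matrix Ω with entries Ω_{ij} = P_{ij} / √(P_{ii} P_{jj}). Let G_M be the moral graph of A. If G_M is acyclic (a tree or forest), then every real eigenvalue of Ω (every element of the real spectrum of Ω) is at most 2. -/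
open Matrix

/-- The moral graph of a `p × p` matrix `A`: distinct vertices `i` and `j` are adjacent iff
`A i j ≠ 0`, or `A j i ≠ 0`, or they share a common child `k` with `A i k ≠ 0` and `A j k ≠ 0`. -/
def moralGraph {p : ℕ} (A : Matrix (Fin p) (Fin p) ℝ) : SimpleGraph (Fin p) :=
  SimpleGraph.fromRel (fun i j => A i j ≠ 0 ∨ ∃ k, A i k ≠ 0 ∧ A j k ≠ 0)

/-! The precision matrix is `P = (1 - A) D⁻¹ (1 - A)ᵀ`, so it is positive semidefinite with
positive diagonal, and `P i j ≠ 0` for `i ≠ j` only if `i` and `j` are adjacent in the moral graph.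
Hence `Ω = D' P D'` with `D' = diag (P i i)^(-1/2)` is positive semidefinite, has unit diagonal and
is supported on the moral graph. A forest is bipartite; if `S` is the `±1` diagonal matrix of a
2-colouring, conjugating by `S` negates every off-diagonal entry of `Ω`, so `S Ω S = 2 - Ω` is
positive semidefinite and the spectrum of `Ω` lies below `2`. -/

theorem SimpleGraph.IsBipartite.exists_sign {V R : Type*} [Ring R] {G : SimpleGraph V}
    (hG : G.IsBipartite) :
    ∃ s : V → R, (∀ v, s v * s v = 1) ∧ ∀ u v, G.Adj u v → s u * s v = -1 := by
  obtain ⟨c⟩ := hG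
  refine ⟨fun v => if c v = 0 then 1 else -1, fun v => ?_, fun u v huv => ?_⟩
  · by_cases hv : c v = 0 <;> simp [hv]
  · have hne := c.valid huv
    by_cases hu : c u = 0 <;> by_cases hv : c v = 0
    · exact absurd (hu.trans hv.symm) hne
    · simp [hu, hv]
    · simp [hu, hv]
    · exact absurd (by omega) hne

namespace Matrix

section Spectrum

open scoped ComplexOrder

variable {n 𝕜 : Type*} [Fintype n] [DecidableEq n] [RCLike 𝕜]

theorem le_of_mem_spectrum_of_posSemidef_sub {M : Matrix n n 𝕜} {c a : 𝕜}
    (hM : (algebraMap 𝕜 (Matrix n n 𝕜) c - M).PosSemidef) (ha : a ∈ spectrum 𝕜 M) : a ≤ c := by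
  have hca : c - a ∈ spectrum 𝕜 (algebraMap 𝕜 (Matrix n n 𝕜) c - M) := by
    rw [← spectrum.singleton_sub_eq]
    exact Set.sub_mem_sub rfl ha
  exact sub_nonneg.mp (posSemidef_iff_isHermitian_and_spectrum_nonneg.mp hM |>.2 hca)

end Spectrum

variable {n : Type*}

noncomputable def normalized (P : Matrix n n ℝ) : Matrix n n ℝ :=
  of fun i j => P i j / √(P i i * P j j)

theorem normalized_apply_self {P : Matrix n n ℝ} {i : n} (hi : 0 < P i i) :
    P.normalized i i = 1 := by
  rw [normalized, of_apply, Real.sqrt_mul_self hi.le, div_self hi.ne']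

theorem normalized_apply_eq_zero {P : Matrix n n ℝ} {i j : n} (h : P i j = 0) :
    P.normalized i j = 0 := by
  rw [normalized, of_apply, h, zero_div]

theorem eq_or_apply_ne_zero_of_one_sub_apply_ne_zero {R : Type*} [Ring R] [DecidableEq n]
    {A : Matrix n n R} {i j : n} (h : (1 - A) i j ≠ 0) : i = j ∨ A i j ≠ 0 := by
  refine or_iff_not_imp_left.mpr fun hij hA => h ?_
  simp [one_apply_ne hij, hA]

variable [Fintype n] [DecidableEq n]

theorem diagonal_mul_mul_diagonal_eq_two_sub {R : Type*} [CommRing R] {M : Matrix n n R}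
    {s : n → R} (hs : ∀ i, s i * s i = 1) (hdiag : ∀ i, M i i = 1)
    (hsupp : ∀ i j, i ≠ j → M i j ≠ 0 → s i * s j = -1) :
    diagonal s * M * diagonal s = algebraMap R (Matrix n n R) 2 - M := by
  ext i j
  rw [mul_diagonal, diagonal_mul, algebraMap_eq_diagonal, sub_apply]
  by_cases hij : i = j
  · subst hij
    rw [hdiag, mul_one, mul_comm, hs, diagonal_apply_eq, Pi.algebraMap_apply,
      Algebra.algebraMap_self, RingHom.id_apply]
    norm_num
  · rw [diagonal_apply_ne _ hij, zero_sub]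
    by_cases hM : M i j = 0
    · simp [hM]
    · linear_combination M i j * hsupp i j hij hM

theorem le_two_of_mem_spectrum_of_isBipartite {G : SimpleGraph n} (hG : G.IsBipartite)
    {M : Matrix n n ℝ} (hM : M.PosSemidef) (hdiag : ∀ i, M i i = 1)
    (hsupp : ∀ i j, i ≠ j → M i j ≠ 0 → G.Adj i j) {a : ℝ} (ha : a ∈ spectrum ℝ M) : a ≤ 2 := by
  obtain ⟨s, hs, hadj⟩ := hG.exists_sign (R := ℝ)
  refine le_of_mem_spectrum_of_posSemidef_sub ?_ ha
  rw [← diagonal_mul_mul_diagonal_eq_two_sub hs hdiag fun i j hij h => hadj i j (hsupp i j hij h)]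
  simpa using hM.mul_mul_conjTranspose_same (diagonal s)

theorem PosSemidef.normalized_eq {P : Matrix n n ℝ} (hP : P.PosSemidef) :
    P.normalized = diagonal (fun i => (√(P i i))⁻¹) * P * diagonal (fun i => (√(P i i))⁻¹) := by
  ext i j
  simp only [normalized, of_apply, mul_diagonal, diagonal_mul]
  rw [Real.sqrt_mul hP.diag_nonneg, div_eq_mul_inv, mul_inv]
  ring

theorem PosSemidef.normalized {P : Matrix n n ℝ} (hP : P.PosSemidef) :
    P.normalized.PosSemidef := by
  rw [hP.normalized_eq]
  simpa using hP.mul_mul_conjTranspose_same (diagonal fun i => (√(P i i))⁻¹)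

theorem det_one_sub_eq_one {R : Type*} [CommRing R] [LinearOrder n] {A : Matrix n n R}
    (hA : ∀ i j, A i j ≠ 0 → i < j) : (1 - A).det = 1 := by
  have hA0 : ∀ i j, ¬ i < j → A i j = 0 := fun i j h => not_imp_comm.mp (hA i j) h
  rw [det_of_isUpperTriangular]
  · simp [hA0]
  · intro i j hij
    simp [one_apply_ne (show j < i from hij).ne', hA0 i j (not_lt_of_gt hij)]

theorem inv_transpose_mul_diagonal_mul_inv {K : Type*} [Field K] {Y : Matrix n n K} {d : n → K}
    (hY : IsUnit Y.det) (hd : ∀ i, d i ≠ 0) :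
    ((Yᵀ)⁻¹ * diagonal d * Y⁻¹)⁻¹ = Y * diagonal d⁻¹ * Yᵀ := by
  have hdiag : (diagonal d)⁻¹ = diagonal d⁻¹ := inv_eq_left_inv (by
    rw [diagonal_mul_diagonal, ← diagonal_one]
    exact congrArg diagonal (funext fun i => inv_mul_cancel₀ (hd i)))
  rw [mul_inv_rev, mul_inv_rev, nonsing_inv_nonsing_inv _ hY,
    nonsing_inv_nonsing_inv _ (by rwa [det_transpose]), hdiag, mul_assoc]

theorem mul_diagonal_mul_transpose_apply {R : Type*} [CommSemiring R] (Y : Matrix n n R)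
    (d : n → R) (i j : n) : (Y * diagonal d * Yᵀ) i j = ∑ k, Y i k * d k * Y j k := by
  rw [mul_apply]
  simp only [mul_diagonal, transpose_apply]

theorem posSemidef_mul_diagonal_mul_transpose (Y : Matrix n n ℝ) {d : n → ℝ} (hd : 0 ≤ d) :
    (Y * diagonal d * Yᵀ).PosSemidef := by
  simpa using (PosSemidef.diagonal hd).mul_mul_conjTranspose_same Y

theorem mul_diagonal_mul_transpose_apply_self_pos {Y : Matrix n n ℝ} {d : n → ℝ}
    (hd : ∀ k, 0 < d k) {i : n} (hi : Y i i ≠ 0) : 0 < (Y * diagonal d * Yᵀ) i i := by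
  rw [mul_diagonal_mul_transpose_apply]
  refine Finset.sum_pos' (fun k _ => ?_) ⟨i, Finset.mem_univ i, ?_⟩
  · nlinarith [mul_self_nonneg (Y i k), hd k]
  · nlinarith [mul_self_pos.mpr hi, hd i]

end Matrix

theorem moralGraph_adj_of_mul_diagonal_mul_transpose_ne_zero {p : ℕ}
    {A : Matrix (Fin p) (Fin p) ℝ} (d : Fin p → ℝ) {i j : Fin p} (hij : i ≠ j)
    (h : ((1 - A) * diagonal d * (1 - A)ᵀ : Matrix (Fin p) (Fin p) ℝ) i j ≠ 0) :
    (moralGraph A).Adj i j := by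
  rw [mul_diagonal_mul_transpose_apply] at h
  obtain ⟨k, -, hk⟩ := Finset.exists_ne_zero_of_sum_ne_zero h
  have hik := eq_or_apply_ne_zero_of_one_sub_apply_ne_zero
    (left_ne_zero_of_mul (left_ne_zero_of_mul hk))
  have hjk := eq_or_apply_ne_zero_of_one_sub_apply_ne_zero (right_ne_zero_of_mul hk)
  refine SimpleGraph.fromRel_adj _ i j |>.mpr ⟨hij, ?_⟩
  rcases hik with rfl | hik <;> rcases hjk with rfl | hjk
  · exact absurd rfl hij
  · exact .inr (.inl hjk)
  · exact .inl (.inl hik)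
  · exact .inl (.inr ⟨k, hik, hjk⟩)

theorem max_eigenvalue_le_two_of_moral_acyclic_general
    {p : ℕ} (A : Matrix (Fin p) (Fin p) ℝ)
    (htopo : ∀ i j, A i j ≠ 0 → i < j)
    (σsq : Fin p → ℝ) (hσ : ∀ i, 0 < σsq i)
    (Cov : Matrix (Fin p) (Fin p) ℝ)
    (hCov : Cov = (1 - Aᵀ)⁻¹ * Matrix.diagonal σsq * (1 - A)⁻¹)
    (P : Matrix (Fin p) (Fin p) ℝ) (hP : P = Cov⁻¹)
    (Ω : Matrix (Fin p) (Fin p) ℝ)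
    (hΩ : ∀ i j, Ω i j = P i j / Real.sqrt (P i i * P j j))
    (hacyclic : (moralGraph A).IsAcyclic) :
    ∀ lam ∈ spectrum ℝ Ω, lam ≤ 2 := by
  intro lam hlam
  have hPform : P = (1 - A) * diagonal σsq⁻¹ * (1 - A)ᵀ := by
    have hX : 1 - Aᵀ = (1 - A)ᵀ := by rw [transpose_sub, transpose_one]
    rw [hP, hCov, hX]
    exact inv_transpose_mul_diagonal_mul_inv (by simp [det_one_sub_eq_one htopo])
      fun i => (hσ i).ne'
  have hPpsd : P.PosSemidef :=
    hPform ▸ posSemidef_mul_diagonal_mul_transpose _ fun k => (inv_pos.mpr (hσ k)).le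
  have hPdiag : ∀ i, 0 < P i i := fun i => by
    rw [hPform]
    refine mul_diagonal_mul_transpose_apply_self_pos (fun k => inv_pos.mpr (hσ k)) ?_
    simp [not_imp_comm.mp (htopo i i) (lt_irrefl i)]
  have hPsupp : ∀ i j, i ≠ j → P i j ≠ 0 → (moralGraph A).Adj i j := fun i j hij h =>
    moralGraph_adj_of_mul_diagonal_mul_transpose_ne_zero σsq⁻¹ hij (hPform ▸ h)
  obtain rfl : Ω = P.normalized := ext hΩ
  exact le_two_of_mem_spectrum_of_isBipartite hacyclic.isBipartite hPpsd.normalized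
    (fun i => normalized_apply_self (hPdiag i))
    (fun i j hij h => hPsupp i j hij (mt normalized_apply_eq_zero h)) hlam

theorem max_eigenvalue_le_two_of_moral_acyclic
    {p : ℕ} (hp : 1 ≤ p) (A : Matrix (Fin p) (Fin p) ℝ)
    (htopo : ∀ i j, A i j ≠ 0 → i < j)
    (σsq : Fin p → ℝ) (hσ : ∀ i, 0 < σsq i)
    (Cov : Matrix (Fin p) (Fin p) ℝ)
    (hCov : Cov = (1 - Aᵀ)⁻¹ * Matrix.diagonal σsq * (1 - A)⁻¹)
    (P : Matrix (Fin p) (Fin p) ℝ) (hP : P = Cov⁻¹)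
    (Ω : Matrix (Fin p) (Fin p) ℝ)
    (hΩ : ∀ i j, Ω i j = P i j / Real.sqrt (P i i * P j j))
    (hacyclic : (moralGraph A).IsAcyclic) :
    ∀ lam ∈ spectrum ℝ Ω, lam ≤ 2 :=
  max_eigenvalue_le_two_of_moral_acyclic_general A htopo σsq hσ Cov hCov P hP Ω hΩ hacyclic
end

section
/- Let p ≥ 1 and let A be a p×p real matrix with A i j ≠ 0 implying i < j (the weighted adjacency matrix of a DAG whose vertices are listed in a topological order), and let G_M be the moral graph of A. Then G_M is acyclic (a tree or forest) if and only if the maximum in-degree of the DAG is at most one, i.e., for every vertex j and all vertices i, i′, if A i j ≠ 0 and A i′ j ≠ 0 then i = i′. -/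
/-
If a vertex has two distinct parents, the two parents are married in the moral graph, so together
with their child they span a triangle. Conversely, if every vertex has at most one parent, no two
vertices share a child, so the moral graph is just the skeleton of the DAG; in it every vertex has
at most one neighbour that precedes it in the topological order. Such a graph has no cycle: the
largest vertex of a cycle would have two distinct smaller neighbours on it.
-/

open Matrix

namespace SimpleGraph

variable {V : Type*} [LinearOrder V] {G : SimpleGraph V}

theorem isAcyclic_of_forall_lt_adj_unique
    (h : ∀ ⦃u v w⦄, G.Adj u w → G.Adj v w → u < w → v < w → u = v) : G.IsAcyclic := by
  intro v c hc
  obtain ⟨m, hm, hmax⟩ := c.support.toFinset.exists_max_image id ⟨v, by simp⟩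
  rw [List.mem_toFinset] at hm
  have hc' := hc.rotate hm
  set c' := c.rotate m hm
  have lt_of_adj : ∀ u ∈ c'.support, G.Adj u m → u < m := fun u hu hadj =>
    (hmax u (by simpa [c'] using hu)).lt_of_ne hadj.ne
  refine hc'.snd_ne_penultimate (h (w := m) ?_ ?_ ?_ ?_)
  · exact (c'.adj_snd hc'.not_nil).symm
  · exact c'.adj_penultimate hc'.not_nil
  · exact lt_of_adj _ (c'.getVert_mem_support 1) (c'.adj_snd hc'.not_nil).symm
  · exact lt_of_adj _ (c'.getVert_mem_support _) (c'.adj_penultimate hc'.not_nil)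

end SimpleGraph

section MoralGraph

variable {p : ℕ} {A : Matrix (Fin p) (Fin p) ℝ} {i j k : Fin p}

theorem moralGraph_adj_iff :
    (moralGraph A).Adj i j ↔
      i ≠ j ∧ (A i j ≠ 0 ∨ A j i ≠ 0 ∨ ∃ k, A i k ≠ 0 ∧ A j k ≠ 0) := by
  simp only [moralGraph, SimpleGraph.fromRel_adj]
  constructor
  · rintro ⟨hne, (h | ⟨k, hi, hj⟩) | (h | ⟨k, hj, hi⟩)⟩
    exacts [⟨hne, .inl h⟩, ⟨hne, .inr (.inr ⟨k, hi, hj⟩)⟩, ⟨hne, .inr (.inl h)⟩,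
      ⟨hne, .inr (.inr ⟨k, hi, hj⟩)⟩]
  · rintro ⟨hne, h | h | ⟨k, hi, hj⟩⟩
    exacts [⟨hne, .inl (.inl h)⟩, ⟨hne, .inr (.inl h)⟩, ⟨hne, .inl (.inr ⟨k, hi, hj⟩)⟩]

theorem moralGraph_adj_of_ne_zero (hij : i ≠ j) (h : A i j ≠ 0) : (moralGraph A).Adj i j :=
  moralGraph_adj_iff.2 ⟨hij, .inl h⟩

theorem moralGraph_adj_of_common_child (hij : i ≠ j) (hi : A i k ≠ 0) (hj : A j k ≠ 0) :
    (moralGraph A).Adj i j :=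
  moralGraph_adj_iff.2 ⟨hij, .inr (.inr ⟨k, hi, hj⟩)⟩

theorem ne_zero_of_moralGraph_adj_of_lt (htopo : ∀ i j, A i j ≠ 0 → i < j)
    (hpar : ∀ j i i' : Fin p, A i j ≠ 0 → A i' j ≠ 0 → i = i')
    (hadj : (moralGraph A).Adj i j) (hij : i < j) : A i j ≠ 0 := by
  obtain ⟨hne, h | h | ⟨k, hi, hj⟩⟩ := moralGraph_adj_iff.1 hadj
  · exact h
  · exact absurd (htopo _ _ h) hij.not_gt
  · exact absurd (hpar k i j hi hj) hne

end MoralGraph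

theorem moralGraph_isAcyclic_iff_max_indegree_le_one_general
    {p : ℕ} (A : Matrix (Fin p) (Fin p) ℝ)
    (htopo : ∀ i j, A i j ≠ 0 → i < j) :
    (moralGraph A).IsAcyclic ↔
      ∀ j i i' : Fin p, A i j ≠ 0 → A i' j ≠ 0 → i = i' := by
  constructor
  · intro hac j i i' hi hi'
    by_contra hne
    have htriangle : (moralGraph A).IsNClique 3 {i, j, i'} :=
      SimpleGraph.is3Clique_triple_iff.2
        ⟨moralGraph_adj_of_ne_zero (htopo _ _ hi).ne hi,
          moralGraph_adj_of_common_child hne hi hi',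
          (moralGraph_adj_of_ne_zero (htopo _ _ hi').ne hi').symm⟩
    exact hac.cliqueFree le_rfl _ htriangle
  · intro hpar
    refine SimpleGraph.isAcyclic_of_forall_lt_adj_unique fun u v w hu hv huw hvw => ?_
    exact hpar w u v (ne_zero_of_moralGraph_adj_of_lt htopo hpar hu huw)
      (ne_zero_of_moralGraph_adj_of_lt htopo hpar hv hvw)

/-- The moral graph of a DAG (with vertices in topological order) is acyclic (a tree or
forest) if and only if every vertex of the DAG has at most one parent. -/
theorem moralGraph_isAcyclic_iff_max_indegree_le_one
    {p : ℕ} (hp : 1 ≤ p) (A : Matrix (Fin p) (Fin p) ℝ)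
    (htopo : ∀ i j, A i j ≠ 0 → i < j) :
    (moralGraph A).IsAcyclic ↔
      ∀ j i i' : Fin p, A i j ≠ 0 → A i' j ≠ 0 → i = i' :=
  moralGraph_isAcyclic_iff_max_indegree_le_one_general A htopo
end

section
/- Let R be a ring, p ≥ 1, and let A be a p×p matrix over R indexed by Fin p. Let r be the relation on Fin p defined by r i j ↔ A i j ≠ 0, and assume the transitive closure of r is irreflexive (i.e., the directed graph with weighted adjacency matrix A has no directed cycles, so A is the adjacency matrix of a DAG). Then A is nilpotent; in fact A^p = 0. -/
/-- A chain of edges yields a transitive-closure relation between its endpoints. -/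
lemma chain_transGen {α : Type*} (r : α → α → Prop) (g : ℕ → α) (n : ℕ)
    (hg : ∀ k < n, r (g k) (g (k + 1))) :
    ∀ a b, a < b → b ≤ n → Relation.TransGen r (g a) (g b) := by
  intro a b hab hbn
  induction b with
  | zero => omega
  | succ m ih =>
    rcases Nat.lt_or_ge a m with h | h
    · exact (ih h (by omega)).tail (hg m (by omega))
    · have : a = m := by omega
      subst this
      exact Relation.TransGen.single (hg a (by omega))

/-- Nonzero entries of powers come from chains of nonzero entries. -/
lemma pow_entry_chain {R : Type*} [Ring R] {p : ℕ}
    (A : Matrix (Fin p) (Fin p) R) :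
    ∀ n (i j : Fin p), (A ^ n) i j ≠ 0 →
      ∃ g : ℕ → Fin p, g 0 = i ∧ g n = j ∧ ∀ k < n, A (g k) (g (k + 1)) ≠ 0 := by
  intro n
  induction n with
  | zero =>
    intro i j h
    have hij : i = j := by
      by_contra hne
      simp [Matrix.one_apply_ne hne] at h
    exact ⟨fun _ => i, rfl, hij ▸ rfl, fun k hk => by omega⟩
  | succ n ih =>
    intro i j h
    rw [pow_succ, Matrix.mul_apply] at h
    obtain ⟨k, hk⟩ := Finset.exists_ne_zero_of_sum_ne_zero h
    have h1 : (A ^ n) i k ≠ 0 := fun h0 => hk.2 (by rw [h0, zero_mul])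
    have h2 : A k j ≠ 0 := fun h0 => hk.2 (by rw [h0, mul_zero])
    obtain ⟨g, hg0, hgn, hgc⟩ := ih i k h1
    refine ⟨fun m => if m ≤ n then g m else j, by simp [hg0], by simp, ?_⟩
    intro m hm
    rcases Nat.lt_or_ge m n with h' | h'
    · simpa [Nat.le_of_lt h', Nat.succ_le_of_lt h'] using hgc m h'
    · have : m = n := by omega
      subst this
      simpa [hgn] using h2

/-- If the directed graph whose weighted adjacency matrix is `A` has no directed cycles
(the transitive closure of the edge relation `r i j ↔ A i j ≠ 0` is irreflexive),
then `A` is nilpotent; in fact `A ^ p = 0`. -/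
theorem adjMatrix_nilpotent_of_acyclic
    {R : Type*} [Ring R] {p : ℕ} (hp : 1 ≤ p)
    (A : Matrix (Fin p) (Fin p) R)
    (hacyclic : ∀ i : Fin p, ¬ Relation.TransGen (fun i j => A i j ≠ 0) i i) :
    IsNilpotent A ∧ A ^ p = 0 := by
  have hAp : A ^ p = 0 := by
    ext i j
    by_contra h
    obtain ⟨g, hg0, hgn, hgc⟩ := pow_entry_chain A p i j h
    have hninj : ¬ Function.Injective (fun k : Fin (p + 1) => g k) := by
      intro hinj
      have := Fintype.card_le_of_injective _ hinj
      simp at this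
    rw [Function.not_injective_iff] at hninj
    obtain ⟨a, b, hab, hne⟩ := hninj
    wlog hlt : (a : ℕ) < (b : ℕ) generalizing a b
    · exact this b a hab.symm hne.symm (by omega)
    have htg := chain_transGen (fun i j => A i j ≠ 0) g p hgc a b hlt (by omega)
    rw [hab] at htg
    exact hacyclic _ htg
  exact ⟨⟨p, hAp⟩, hAp⟩
end

section
/- Let (α, μ) be a probability space, p ≥ 1, and let Ω̂ : α → (p×p real matrices) be a random matrix each of whose entries is square-integrable, with entrywise expectation E[Ω̂] = Ω. Then for every real number ρ, E[‖(1−ρ)Ω̂ + ρI − Ω‖_F²] = (1−ρ)² E[‖Ω̂ − Ω‖_F²] + ρ² ‖I − Ω‖_F², where I is the p×p identity matrix. -/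
/-!
Write `(1 - ρ)Ω̂ + ρI - Ω = (1 - ρ)(Ω̂ - Ω) + ρ(I - Ω)`. The first summand is centred and the
second is deterministic, so entrywise the cross term has zero expectation and the expected
squared Frobenius norm splits as in Pythagoras' theorem.
-/

open MeasureTheory Matrix

/-- The scaled squared Frobenius norm `‖A‖_F² = tr(AᵀA)/p` of a `p × p` real matrix. -/
noncomputable def frobSq {p : ℕ} (A : Matrix (Fin p) (Fin p) ℝ) : ℝ :=
  Matrix.trace (Aᵀ * A) / p

lemma frobSq_eq_sum_sq {p : ℕ} (A : Matrix (Fin p) (Fin p) ℝ) :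
    frobSq A = (∑ i, ∑ j, A i j ^ 2) / p := by
  rw [frobSq, trace, Finset.sum_comm]
  simp only [diag, mul_apply, transpose_apply, sq]

lemma frobSq_smul {p : ℕ} (c : ℝ) (A : Matrix (Fin p) (Fin p) ℝ) :
    frobSq (c • A) = c ^ 2 * frobSq A := by
  rw [frobSq, frobSq, transpose_smul, smul_mul_smul_comm, trace_smul, smul_eq_mul, ← sq,
    mul_div_assoc]

section Integral

variable {α : Type*} [MeasurableSpace α] {μ : Measure α}

lemma integral_add_const_sq [IsProbabilityMeasure μ] {X : α → ℝ} (hX : MemLp X 2 μ)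
    (hX0 : ∫ a, X a ∂μ = 0) (c : ℝ) :
    ∫ a, (X a + c) ^ 2 ∂μ = ∫ a, X a ^ 2 ∂μ + c ^ 2 := by
  have hX1 : Integrable X μ := hX.integrable one_le_two
  have hlin : Integrable (fun a => 2 * c * X a + c ^ 2) μ :=
    (hX1.const_mul _).add (integrable_const _)
  have hexpand : ∀ a, (X a + c) ^ 2 = X a ^ 2 + (2 * c * X a + c ^ 2) := fun a => by ring
  simp_rw [hexpand]
  rw [integral_add hX.integrable_sq hlin,
    integral_add (hX1.const_mul _) (integrable_const _), integral_const_mul, hX0]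
  simp

variable {p : ℕ} {Y : α → Matrix (Fin p) (Fin p) ℝ}

lemma integral_frobSq (hY : ∀ i j, MemLp (fun a => Y a i j) 2 μ) :
    ∫ a, frobSq (Y a) ∂μ = (∑ i, ∑ j, ∫ a, Y a i j ^ 2 ∂μ) / p := by
  have hint : ∀ i j, Integrable (fun a => Y a i j ^ 2) μ := fun i j => (hY i j).integrable_sq
  simp_rw [frobSq_eq_sum_sq]
  rw [integral_div, integral_finsetSum _ fun i _ => integrable_finsetSum _ fun j _ => hint i j]
  simp_rw [integral_finsetSum _ fun j _ => hint _ j]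

lemma integral_frobSq_add_const [IsProbabilityMeasure μ]
    (hY : ∀ i j, MemLp (fun a => Y a i j) 2 μ) (hY0 : ∀ i j, ∫ a, Y a i j ∂μ = 0)
    (C : Matrix (Fin p) (Fin p) ℝ) :
    ∫ a, frobSq (Y a + C) ∂μ = ∫ a, frobSq (Y a) ∂μ + frobSq C := by
  have hYC : ∀ i j, MemLp (fun a => (Y a + C) i j) 2 μ := fun i j => (hY i j).add (memLp_const _)
  rw [integral_frobSq hYC, integral_frobSq hY, frobSq_eq_sum_sq, ← add_div]
  simp only [Matrix.add_apply, integral_add_const_sq (hY _ _) (hY0 _ _), Finset.sum_add_distrib]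

end Integral

theorem shrinkage_bias_variance_decomposition_general
    {α : Type*} [MeasurableSpace α] (μ : Measure α) [IsProbabilityMeasure μ]
    {p : ℕ}
    (Ωhat : α → Matrix (Fin p) (Fin p) ℝ)
    (hL2 : ∀ i j, MemLp (fun a => Ωhat a i j) 2 μ)
    (Ω : Matrix (Fin p) (Fin p) ℝ)
    (hmean : ∀ i j, (∫ a, Ωhat a i j ∂μ) = Ω i j)
    (ρ : ℝ) :
    (∫ a, frobSq ((1 - ρ) • Ωhat a + ρ • (1 : Matrix (Fin p) (Fin p) ℝ) - Ω) ∂μ)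
      = (1 - ρ) ^ 2 * (∫ a, frobSq (Ωhat a - Ω) ∂μ)
        + ρ ^ 2 * frobSq ((1 : Matrix (Fin p) (Fin p) ℝ) - Ω) := by
  have hL2_err : ∀ i j, MemLp (fun a => ((1 - ρ) • (Ωhat a - Ω)) i j) 2 μ :=
    fun i j => ((hL2 i j).sub (memLp_const _)).const_mul _
  have hcentred : ∀ i j, ∫ a, ((1 - ρ) • (Ωhat a - Ω)) i j ∂μ = 0 := fun i j => by
    simp only [Matrix.smul_apply, Matrix.sub_apply, smul_eq_mul]
    rw [integral_const_mul, integral_sub ((hL2 i j).integrable one_le_two) (integrable_const _),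
      hmean, integral_const]
    simp
  calc ∫ a, frobSq ((1 - ρ) • Ωhat a + ρ • (1 : Matrix (Fin p) (Fin p) ℝ) - Ω) ∂μ
      = ∫ a, frobSq ((1 - ρ) • (Ωhat a - Ω) + ρ • (1 - Ω)) ∂μ := by
        congr 1 with a
        congr 1
        module
    _ = _ := by
        rw [integral_frobSq_add_const hL2_err hcentred]
        simp only [frobSq_smul, integral_const_mul]

/-- Bias-variance decomposition for the Stein-type shrinkage estimator:
`E[‖(1−ρ)Ω̂ + ρI − Ω‖_F²] = (1−ρ)² E[‖Ω̂ − Ω‖_F²] + ρ² ‖I − Ω‖_F²`. -/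
theorem shrinkage_bias_variance_decomposition
    {α : Type*} [MeasurableSpace α] (μ : Measure α) [IsProbabilityMeasure μ]
    {p : ℕ} (hp : 1 ≤ p)
    (Ωhat : α → Matrix (Fin p) (Fin p) ℝ)
    (hL2 : ∀ i j, MemLp (fun a => Ωhat a i j) 2 μ)
    (Ω : Matrix (Fin p) (Fin p) ℝ)
    (hmean : ∀ i j, (∫ a, Ωhat a i j ∂μ) = Ω i j)
    (ρ : ℝ) :
    (∫ a, frobSq ((1 - ρ) • Ωhat a + ρ • (1 : Matrix (Fin p) (Fin p) ℝ) - Ω) ∂μ)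
      = (1 - ρ) ^ 2 * (∫ a, frobSq (Ωhat a - Ω) ∂μ)
        + ρ ^ 2 * frobSq ((1 : Matrix (Fin p) (Fin p) ℝ) - Ω) :=
  shrinkage_bias_variance_decomposition_general μ Ωhat hL2 Ω hmean ρ
end

section
/- Let (α, μ) be a probability space, p ≥ 1, and let Ω̂ : α → (p×p real matrices) be a random matrix each of whose entries is square-integrable, with entrywise expectation E[Ω̂] = Ω. Assume Ω has unit diagonal (Ω_{ii} = 1 for all i) and that δ² := E[‖Ω̂ − I‖_F²] > 0. Let tr(Σ_Ω̂) := Σ_{i,j} Var(Ω̂_{ij}). Then the minimizer ρ* = E[‖Ω̂ − Ω‖_F²] / E[‖Ω̂ − I‖_F²] of ρ ↦ E[‖(1−ρ)Ω̂ + ρI − Ω‖_F²] satisfies the closed form ρ* = tr(Σ_Ω̂) / (tr(Σ_Ω̂) + tr(ΩᵀΩ) − p). -/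
open MeasureTheory Matrix

/-! Entrywise bias–variance decomposition gives `E‖Ω̂ − C‖² = tr(Σ_Ω̂) + ‖Ω − C‖²` for every
constant matrix `C`. For `C = Ω` the bias vanishes, and for `C = I` it is
`tr(ΩᵀΩ) − 2 tr Ω + p = tr(ΩᵀΩ) − p` because `Ω` has unit diagonal; the common factor `1/p`
of the Frobenius scaling cancels in the ratio. -/

open ProbabilityTheory

lemma integral_sub_const_sq {α : Type*} [MeasurableSpace α] {μ : Measure α}
    [IsProbabilityMeasure μ] {X : α → ℝ} (hX : MemLp X 2 μ) (c : ℝ) :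
    ∫ a, (X a - c) ^ 2 ∂μ = Var[X; μ] + (μ[X] - c) ^ 2 := by
  have hXc : MemLp (fun a => X a - c) 2 μ := hX.sub (memLp_const c)
  have hmean : μ[fun a => X a - c] = μ[X] - c := by
    rw [integral_sub (hX.integrable one_le_two) (integrable_const c), integral_const]
    simp
  rw [← variance_sub_const hX.aestronglyMeasurable c, variance_eq_sub hXc, hmean]
  simp only [Pi.pow_apply]
  ring

lemma Matrix.trace_transpose_mul_self {m n : Type*} [Fintype m] [Fintype n]
    (A : Matrix m n ℝ) : trace (Aᵀ * A) = ∑ i, ∑ j, A i j ^ 2 := by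
  simp only [trace, diag, mul_apply, transpose_apply, sq]
  exact Finset.sum_comm

lemma Matrix.trace_transpose_mul_self_sub_one {n : Type*} [Fintype n] [DecidableEq n]
    {Ω : Matrix n n ℝ} (hdiag : ∀ i, Ω i i = 1) :
    trace ((Ω - 1)ᵀ * (Ω - 1)) = trace (Ωᵀ * Ω) - Fintype.card n := by
  have htrace : trace Ω = Fintype.card n := by simp [trace, hdiag]
  simp only [transpose_sub, transpose_one, sub_mul, mul_sub, mul_one, one_mul, trace_sub,
    trace_transpose, trace_one, htrace]
  ring

noncomputable def meanMatrix {α : Type*} [MeasurableSpace α] (μ : Measure α) {m n : Type*}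
    (X : α → Matrix m n ℝ) : Matrix m n ℝ :=
  of fun i j => ∫ a, X a i j ∂μ

lemma integral_trace_transpose_mul_self_sub {α : Type*} [MeasurableSpace α] {μ : Measure α}
    [IsProbabilityMeasure μ] {m n : Type*} [Fintype m] [Fintype n] {X : α → Matrix m n ℝ}
    (hX : ∀ i j, MemLp (fun a => X a i j) 2 μ) (C : Matrix m n ℝ) :
    ∫ a, trace ((X a - C)ᵀ * (X a - C)) ∂μ
      = ∑ i, ∑ j, Var[fun a => X a i j; μ]
        + trace ((meanMatrix μ X - C)ᵀ * (meanMatrix μ X - C)) := by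
  have hint : ∀ i j, Integrable (fun a => (X a i j - C i j) ^ 2) μ :=
    fun i j => ((hX i j).sub (memLp_const _)).integrable_sq
  simp only [trace_transpose_mul_self, Matrix.sub_apply, meanMatrix, of_apply]
  rw [integral_finsetSum _ fun i _ => integrable_finsetSum _ fun j _ => hint i j,
    ← Finset.sum_add_distrib]
  refine Finset.sum_congr rfl fun i _ => ?_
  rw [integral_finsetSum _ fun j _ => hint i j, ← Finset.sum_add_distrib]
  exact Finset.sum_congr rfl fun j _ => integral_sub_const_sq (hX i j) (C i j)

theorem shrinkage_weight_closed_form_general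
    {α : Type*} [MeasurableSpace α] (μ : Measure α) [IsProbabilityMeasure μ]
    {p : ℕ} (hp : 1 ≤ p)
    (Ωhat : α → Matrix (Fin p) (Fin p) ℝ)
    (hL2 : ∀ i j, MemLp (fun a => Ωhat a i j) 2 μ)
    (Ω : Matrix (Fin p) (Fin p) ℝ)
    (hmean : ∀ i j, (∫ a, Ωhat a i j ∂μ) = Ω i j)
    (hdiag : ∀ i, Ω i i = 1)
    (trSigOmegaHat : ℝ)
    (htr : trSigOmegaHat = ∑ i : Fin p, ∑ j : Fin p,
      ((∫ a, (Ωhat a i j) ^ 2 ∂μ) - (∫ a, Ωhat a i j ∂μ) ^ 2))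
    (ρstar : ℝ)
    (hρstar : ρstar = (∫ a, frobSq (Ωhat a - Ω) ∂μ)
        / ∫ a, frobSq (Ωhat a - (1 : Matrix (Fin p) (Fin p) ℝ)) ∂μ) :
    ρstar = trSigOmegaHat / (trSigOmegaHat + Matrix.trace (Ωᵀ * Ω) - p) := by
  have hM : meanMatrix μ Ωhat = Ω := ext hmean
  have hvar : ∑ i, ∑ j, Var[fun a => Ωhat a i j; μ] = trSigOmegaHat := by
    simp only [htr, variance_eq_sub (hL2 _ _), Pi.pow_apply]
  have hp0 : (p : ℝ) ≠ 0 := by exact_mod_cast Nat.one_le_iff_ne_zero.mp hp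
  simp only [hρstar, frobSq]
  rw [integral_div, integral_div, integral_trace_transpose_mul_self_sub hL2,
    integral_trace_transpose_mul_self_sub hL2, hM, hvar, sub_self, transpose_zero, zero_mul,
    trace_zero, add_zero, trace_transpose_mul_self_sub_one hdiag, Fintype.card_fin,
    div_div_div_cancel_right₀ hp0, add_sub_assoc]

/-- Closed form for the optimal shrinkage weight: when `Ω = E[Ω̂]` has unit diagonal,
`ρ* = E[‖Ω̂ − Ω‖_F²]/E[‖Ω̂ − I‖_F²] = tr(Σ_Ω̂)/(tr(Σ_Ω̂) + tr(ΩᵀΩ) − p)`,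
where `tr(Σ_Ω̂) = Σ_{i,j} Var(Ω̂_{ij})`. -/
theorem shrinkage_weight_closed_form
    {α : Type*} [MeasurableSpace α] (μ : Measure α) [IsProbabilityMeasure μ]
    {p : ℕ} (hp : 1 ≤ p)
    (Ωhat : α → Matrix (Fin p) (Fin p) ℝ)
    (hL2 : ∀ i j, MemLp (fun a => Ωhat a i j) 2 μ)
    (Ω : Matrix (Fin p) (Fin p) ℝ)
    (hmean : ∀ i j, (∫ a, Ωhat a i j ∂μ) = Ω i j)
    (hdiag : ∀ i, Ω i i = 1)
    (hδpos : 0 < ∫ a, frobSq (Ωhat a - (1 : Matrix (Fin p) (Fin p) ℝ)) ∂μ)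
    (trSigOmegaHat : ℝ)
    (htr : trSigOmegaHat = ∑ i : Fin p, ∑ j : Fin p,
      ((∫ a, (Ωhat a i j) ^ 2 ∂μ) - (∫ a, Ωhat a i j ∂μ) ^ 2))
    (ρstar : ℝ)
    (hρstar : ρstar = (∫ a, frobSq (Ωhat a - Ω) ∂μ)
        / ∫ a, frobSq (Ωhat a - (1 : Matrix (Fin p) (Fin p) ℝ)) ∂μ) :
    ρstar = trSigOmegaHat / (trSigOmegaHat + Matrix.trace (Ωᵀ * Ω) - p) :=
  shrinkage_weight_closed_form_general μ hp Ωhat hL2 Ω hmean hdiag trSigOmegaHat htr ρstar hρstar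
end

section
/- Let p ≥ 1 and let f be the map on p×p real matrices defined by f(A) = d(A) · A · d(A), where d(A) is the diagonal matrix with entries d(A)_{ii} = (A_{ii})^{-1/2}. Let A₀ be a p×p real matrix with A₀_{ii} > 0 for all i, let D₀ be the diagonal matrix with entries A₀_{ii}, let Ψ = f(A₀), and for a matrix H let dg(H) denote the diagonal matrix with entries H_{ii}. Then f is Fréchet differentiable at A₀ with derivative H ↦ d(A₀) · H · d(A₀) − (1/2)(dg(H) · D₀⁻¹ · Ψ + Ψ · D₀⁻¹ · dg(H)). -/
/-!
Entrywise, `f(A)ᵢⱼ = (A_ii)^{-1/2} A_ij (A_jj)^{-1/2}`, and a matrix-valued map is Fréchet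
differentiable exactly when its entries are. So the derivative is read off from the scalar
product rule together with `d/dx x^{-1/2} = -½ x⁻¹ x^{-1/2}`; in matrix form the two outer
factors contribute `-½ dg(H) D₀⁻¹ Ψ` and `-½ Ψ D₀⁻¹ dg(H)`.
-/

open Matrix

attribute [local instance] Matrix.normedAddCommGroup Matrix.normedSpace

/-- `d(A)`: the diagonal matrix with entries `(A_{ii})^{-1/2}`. -/
noncomputable def dmat {p : ℕ} (A : Matrix (Fin p) (Fin p) ℝ) : Matrix (Fin p) (Fin p) ℝ :=
  Matrix.diagonal fun i => (Real.sqrt (A i i))⁻¹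

/-- The normalization map `f(A) = d(A) · A · d(A)`. -/
noncomputable def normalizeMat {p : ℕ} (A : Matrix (Fin p) (Fin p) ℝ) :
    Matrix (Fin p) (Fin p) ℝ :=
  dmat A * A * dmat A

namespace Matrix

variable {m n : Type*}

def entryCLM {R : Type*} [Semiring R] [TopologicalSpace R] (i : m) (j : n) :
    Matrix m n R →L[R] R :=
  (ContinuousLinearMap.proj (R := R) (φ := fun _ : n => R) j).comp
    (ContinuousLinearMap.proj (φ := fun _ : m => n → R) i)

theorem hasFDerivAt_iff_apply {𝕜 E : Type*} [NontriviallyNormedField 𝕜]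
    [Fintype m] [Fintype n] [NormedAddCommGroup E] [NormedSpace 𝕜 E]
    {Φ : E → Matrix m n 𝕜} {Φ' : E →L[𝕜] Matrix m n 𝕜} {x : E} :
    HasFDerivAt Φ Φ' x ↔ ∀ i j, HasFDerivAt (fun y => Φ y i j) ((entryCLM i j).comp Φ') x :=
  hasFDerivAt_pi'.trans (forall_congr' fun _ => hasFDerivAt_pi')

theorem inv_diagonal_of_ne_zero {K : Type*} [Field K] [Fintype n] [DecidableEq n] {v : n → K}
    (hv : ∀ i, v i ≠ 0) : (diagonal v)⁻¹ = diagonal fun i => (v i)⁻¹ := by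
  refine inv_eq_left_inv ?_
  rw [diagonal_mul_diagonal, ← diagonal_one]
  exact congrArg diagonal (funext fun i => inv_mul_cancel₀ (hv i))

end Matrix

theorem HasFDerivAt.inv_sqrt {E : Type*} [NormedAddCommGroup E] [NormedSpace ℝ E]
    {f : E → ℝ} {f' : E →L[ℝ] ℝ} {x : E} (hf : HasFDerivAt f f' x) (hx : 0 < f x) :
    HasFDerivAt (fun y => (√(f y))⁻¹) ((-(1 / 2) * (f x)⁻¹ * (√(f x))⁻¹) • f') x := by
  have h := (Real.hasDerivAt_sqrt hx.ne').inv (Real.sqrt_pos.2 hx).ne'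
  rw [Real.sq_sqrt hx.le] at h
  exact (h.congr_deriv (by ring)).comp_hasFDerivAt x hf

theorem normalizeMat_apply {p : ℕ} (A : Matrix (Fin p) (Fin p) ℝ) (i j : Fin p) :
    normalizeMat A i j = (√(A i i))⁻¹ * A i j * (√(A j j))⁻¹ := by
  simp [normalizeMat, dmat, diagonal_mul, mul_diagonal]

noncomputable def normalizeMatFDeriv {p : ℕ} (A : Matrix (Fin p) (Fin p) ℝ) :
    Matrix (Fin p) (Fin p) ℝ →L[ℝ] Matrix (Fin p) (Fin p) ℝ :=
  LinearMap.toContinuousLinearMap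
    { toFun := fun H => dmat A * H * dmat A - (1 / 2 : ℝ) •
        (diagonal (diag H) * (diagonal (diag A))⁻¹ * normalizeMat A
          + normalizeMat A * (diagonal (diag A))⁻¹ * diagonal (diag H))
      map_add' := fun H K => by
        simp only [diag_add, Pi.add_def, ← diagonal_add, Matrix.mul_add, Matrix.add_mul,
          smul_add]
        abel
      map_smul' := fun c H => by
        simp only [diag_smul, diagonal_smul, Matrix.mul_smul, Matrix.smul_mul, smul_sub,
          smul_add, smul_comm c (1 / 2 : ℝ), RingHom.id_apply] }

theorem normalizeMatFDeriv_apply_apply {p : ℕ} {A : Matrix (Fin p) (Fin p) ℝ}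
    (hA : ∀ i, A i i ≠ 0) (H : Matrix (Fin p) (Fin p) ℝ) (i j : Fin p) :
    normalizeMatFDeriv A H i j = (√(A i i))⁻¹ * H i j * (√(A j j))⁻¹
      - 1 / 2 * (H i i * (A i i)⁻¹ + (A j j)⁻¹ * H j j) * normalizeMat A i j := by
  simp [normalizeMatFDeriv, inv_diagonal_of_ne_zero (v := diag A) hA, dmat, diagonal_mul, mul_diagonal]
  ring

theorem hasFDerivAt_normalizeMat_of_diag_pos {p : ℕ} {A : Matrix (Fin p) (Fin p) ℝ}
    (hA : ∀ i, 0 < A i i) : HasFDerivAt normalizeMat (normalizeMatFDeriv A) A := by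
  refine Matrix.hasFDerivAt_iff_apply.2 fun i j => ?_
  have entry (k l : Fin p) := (entryCLM k l).hasFDerivAt (x := A)
  have product :=
    (((entry i i).inv_sqrt (hA i)).mul (entry i j)).mul ((entry j j).inv_sqrt (hA j))
  refine product.congr_of_eventuallyEq (Filter.Eventually.of_forall fun B => ?_)
    |>.congr_fderiv (ContinuousLinearMap.ext fun H => ?_)
  · exact normalizeMat_apply B i j
  -- `entryCLM` carries the product topology of `Matrix`, which `simp` does not identify with
  -- the normed one, so the product rule's derivative is unfolded by `change` instead.
  · change (√(A i i))⁻¹ * A i j * (-(1 / 2) * (A j j)⁻¹ * (√(A j j))⁻¹ * H j j)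
        + (√(A j j))⁻¹ * ((√(A i i))⁻¹ * H i j
          + A i j * (-(1 / 2) * (A i i)⁻¹ * (√(A i i))⁻¹ * H i i))
        = normalizeMatFDeriv A H i j
    rw [normalizeMatFDeriv_apply_apply (fun k => (hA k).ne'), normalizeMat_apply]
    ring

theorem hasFDerivAt_normalizeMat_general
    {p : ℕ} (A₀ : Matrix (Fin p) (Fin p) ℝ)
    (hpos : ∀ i, 0 < A₀ i i)
    (D₀ : Matrix (Fin p) (Fin p) ℝ) (hD₀ : D₀ = Matrix.diagonal fun i => A₀ i i)
    (Ψ : Matrix (Fin p) (Fin p) ℝ) (hΨ : Ψ = normalizeMat A₀) :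
    ∃ L : Matrix (Fin p) (Fin p) ℝ →L[ℝ] Matrix (Fin p) (Fin p) ℝ,
      (∀ H : Matrix (Fin p) (Fin p) ℝ,
        L H = dmat A₀ * H * dmat A₀
          - (1 / 2 : ℝ) • ((Matrix.diagonal fun i => H i i) * D₀⁻¹ * Ψ
              + Ψ * D₀⁻¹ * (Matrix.diagonal fun i => H i i)))
      ∧ HasFDerivAt normalizeMat L A₀ := by
  subst hD₀ hΨ
  exact ⟨normalizeMatFDeriv A₀, fun _ => rfl, hasFDerivAt_normalizeMat_of_diag_pos hpos⟩

/-- Neudecker's derivative of the normalization map (matrix form): `f` is Fréchet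
differentiable at `A₀` with derivative
`H ↦ d(A₀)·H·d(A₀) − (1/2)(dg(H)·D₀⁻¹·Ψ + Ψ·D₀⁻¹·dg(H))`. -/
theorem hasFDerivAt_normalizeMat
    {p : ℕ} (hp : 1 ≤ p) (A₀ : Matrix (Fin p) (Fin p) ℝ)
    (hpos : ∀ i, 0 < A₀ i i)
    (D₀ : Matrix (Fin p) (Fin p) ℝ) (hD₀ : D₀ = Matrix.diagonal fun i => A₀ i i)
    (Ψ : Matrix (Fin p) (Fin p) ℝ) (hΨ : Ψ = normalizeMat A₀) :
    ∃ L : Matrix (Fin p) (Fin p) ℝ →L[ℝ] Matrix (Fin p) (Fin p) ℝ,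
      (∀ H : Matrix (Fin p) (Fin p) ℝ,
        L H = dmat A₀ * H * dmat A₀
          - (1 / 2 : ℝ) • ((Matrix.diagonal fun i => H i i) * D₀⁻¹ * Ψ
              + Ψ * D₀⁻¹ * (Matrix.diagonal fun i => H i i)))
      ∧ HasFDerivAt normalizeMat L A₀ :=
  hasFDerivAt_normalizeMat_general A₀ hpos D₀ hD₀ Ψ hΨ
end
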